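/- arXiv:2403.18984 — 2 statements merged into one kernel-verified Lean document; each statement's English description precedes it below -/
import Mathlib

section
/- Let (X, d) be a metric space and fix constants d_H > 0, d_W ≥ 2, s ∈ (0, 1), and c₁, c₂, c₃, c₄ > 0. Suppose p : (0, ∞) × X × X → ℝ satisfies, for all t > 0 and all x, y ∈ X, the two-sided sub-Gaussian bound c₁·t^{−d_H/d_W}·exp(−c₂·(d(x, y)^{d_W}/t)^{1/(d_W−1)}) ≤ p(t, x, y) ≤ c₃·t^{−d_H/d_W}·exp(−c₄·(d(x, y)^{d_W}/t)^{1/(d_W−1)}). Then there exist constants 0 < c ≤ C, depending only on d_H, d_W, s, c₁, c₂, c₃, c₄, such that for all x, y ∈ X with d(x, y) > 0, c·d(x, y)^{−(d_H + s·d_W)} ≤ ∫₀^∞ p(t, x, y)·t^{−1−s} dt ≤ C·d(x, y)^{−(d_H + s·d_W)}. In particular the jump kernel K(x, y) = ∫₀^∞ p(t, x, y)·t^{−1−s} dt is finite for x ≠ y and comparable to d(x, y)^{−(d_H + s·d_W)}. -/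
open MeasureTheory Real Set

/-!
By the two-sided bounds, `p t x y * t ^ (-(1 + s))` lies between constant multiples of
`t ^ (-(d_H / d_W) - 1 - s) * exp (-a * (d ^ d_W / t) ^ (1 / (d_W - 1)))` (`d = dist x y`).
This envelope is `t ^ q * exp (-b * t ^ (-γ))` with `q = -(d_H / d_W) - 1 - s`,
`γ = 1 / (d_W - 1)` and `b = a * d ^ (d_W γ)`; the substitution `t = 1 / x` turns its integral
into a Gamma integral, a constant times `b ^ ((q + 1) / γ)`, and the power of `d` in
`b ^ ((q + 1) / γ)` is exactly `-(d_H + s d_W)`.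
-/

lemma integrableOn_and_setIntegral_mono_of_le_of_le {α : Type*} [MeasurableSpace α]
    {μ : Measure α} {S : Set α} {f g₁ g₂ : α → ℝ} (hS : MeasurableSet S)
    (hf : AEStronglyMeasurable f (μ.restrict S)) (hg₁ : IntegrableOn g₁ S μ)
    (hg₂ : IntegrableOn g₂ S μ) (h₁ : ∀ x ∈ S, g₁ x ≤ f x) (h₂ : ∀ x ∈ S, f x ≤ g₂ x) :
    IntegrableOn f S μ ∧ ∫ x in S, g₁ x ∂μ ≤ ∫ x in S, f x ∂μ ∧
      ∫ x in S, f x ∂μ ≤ ∫ x in S, g₂ x ∂μ := by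
  have hf_int : IntegrableOn f S μ := integrable_of_le_of_le hf
    (ae_restrict_of_forall_mem hS h₁) (ae_restrict_of_forall_mem hS h₂) hg₁ hg₂
  exact ⟨hf_int, setIntegral_mono_on hg₁ hf_int hS h₁, setIntegral_mono_on hf_int hg₂ hS h₂⟩

section Profile

variable {γ q b : ℝ}

lemma eqOn_rpow_neg_two_smul_comp_rpow_neg_one :
    EqOn (fun x : ℝ =>
        x ^ ((-1 : ℝ) - 1) • ((x ^ (-1 : ℝ)) ^ q * exp (-b * (x ^ (-1 : ℝ)) ^ (-γ))))
      (fun x => x ^ (-q - 2) * exp (-b * x ^ γ)) (Ioi 0) := by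
  intro x (hx : 0 < x)
  dsimp only
  rw [smul_eq_mul, ← rpow_mul hx.le, ← rpow_mul hx.le, ← mul_assoc, ← rpow_add hx]
  ring_nf

lemma integrableOn_rpow_mul_exp_neg_mul_rpow_neg (hγ : 0 < γ) (hq : q < -1) (hb : 0 < b) :
    IntegrableOn (fun x : ℝ => x ^ q * exp (-b * x ^ (-γ))) (Ioi 0) := by
  rw [← integrableOn_Ioi_comp_rpow_iff' _ (by norm_num : (-1 : ℝ) ≠ 0),
    integrableOn_congr_fun eqOn_rpow_neg_two_smul_comp_rpow_neg_one measurableSet_Ioi]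
  exact integrableOn_rpow_mul_exp_neg_mul_rpow (by linarith) hγ hb

lemma integral_rpow_mul_exp_neg_mul_rpow_neg (hγ : 0 < γ) (hq : q < -1) (hb : 0 < b) :
    ∫ x in Ioi (0 : ℝ), x ^ q * exp (-b * x ^ (-γ)) =
      b ^ ((q + 1) / γ) * (1 / γ) * Gamma (-(q + 1) / γ) := by
  rw [← integral_comp_rpow_Ioi _ (by norm_num : (-1 : ℝ) ≠ 0)]
  simp_rw [mul_smul]
  rw [integral_smul, setIntegral_congr_fun measurableSet_Ioi
      eqOn_rpow_neg_two_smul_comp_rpow_neg_one,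
    integral_rpow_mul_exp_neg_mul_rpow hγ (by linarith) hb, abs_neg, abs_one, one_smul,
    show -q - 2 + 1 = -(q + 1) by ring, neg_neg]

end Profile

noncomputable def subGaussianJumpIntegrand (d_H d_W s a r t : ℝ) : ℝ :=
  t ^ (-(d_H / d_W)) * exp (-a * (r ^ d_W / t) ^ (1 / (d_W - 1))) * t ^ (-(1 + s))

noncomputable def subGaussianJumpConst (d_H d_W s a : ℝ) : ℝ :=
  (d_W - 1) * a ^ (-((d_W - 1) * (d_H / d_W + s))) * Gamma ((d_W - 1) * (d_H / d_W + s))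

section SubGaussian

variable {d_H d_W s a r : ℝ}

lemma subGaussianJumpConst_pos (hdW : 1 < d_W) (hds : 0 < d_H / d_W + s) (ha : 0 < a) :
    0 < subGaussianJumpConst d_H d_W s a := by
  have hdW₁ := sub_pos.2 hdW
  have := Gamma_pos_of_pos (mul_pos hdW₁ hds)
  unfold subGaussianJumpConst
  positivity

lemma eqOn_subGaussianJumpIntegrand (hr : 0 < r) :
    EqOn (subGaussianJumpIntegrand d_H d_W s a r)
      (fun t => t ^ (-(d_H / d_W) + -(1 + s)) *
        exp (-(a * (r ^ d_W) ^ (1 / (d_W - 1))) * t ^ (-(1 / (d_W - 1))))) (Ioi 0) := by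
  intro t (ht : 0 < t)
  dsimp only
  rw [subGaussianJumpIntegrand, rpow_add ht, div_rpow (by positivity) ht.le,
    rpow_neg ht.le (1 / (d_W - 1))]
  ring_nf

lemma integrableOn_subGaussianJumpIntegrand (hdW : 1 < d_W) (hds : 0 < d_H / d_W + s)
    (ha : 0 < a) (hr : 0 < r) :
    IntegrableOn (subGaussianJumpIntegrand d_H d_W s a r) (Ioi 0) := by
  rw [integrableOn_congr_fun (eqOn_subGaussianJumpIntegrand hr) measurableSet_Ioi]
  exact integrableOn_rpow_mul_exp_neg_mul_rpow_neg (one_div_pos.2 (sub_pos.2 hdW)) (by linarith)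
    (by positivity)

lemma integral_subGaussianJumpIntegrand (hdW : 1 < d_W) (hds : 0 < d_H / d_W + s)
    (ha : 0 < a) (hr : 0 < r) :
    ∫ t in Ioi (0 : ℝ), subGaussianJumpIntegrand d_H d_W s a r t =
      subGaussianJumpConst d_H d_W s a * r ^ (-(d_H + s * d_W)) := by
  have hdW₁ := sub_pos.2 hdW
  have hb_exp : (-(d_H / d_W) + -(1 + s) + 1) / (1 / (d_W - 1)) =
      -((d_W - 1) * (d_H / d_W + s)) := by
    field_simp
    ring
  have hr_exp : d_W * (1 / (d_W - 1)) * -((d_W - 1) * (d_H / d_W + s)) = -(d_H + s * d_W) := by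
    field_simp
  rw [setIntegral_congr_fun measurableSet_Ioi (eqOn_subGaussianJumpIntegrand hr),
    integral_rpow_mul_exp_neg_mul_rpow_neg (by positivity) (by linarith) (by positivity),
    mul_rpow ha.le (by positivity), ← rpow_mul hr.le, ← rpow_mul hr.le, neg_div, hb_exp, neg_neg,
    hr_exp, one_div_one_div, subGaussianJumpConst]
  ring

end SubGaussian

theorem jump_kernel_comparable_general
    {X : Type*} [MetricSpace X]
    (d_H d_W s c₁ c₂ c₃ c₄ : ℝ)
    (hdH : 0 < d_H) (hdW : 2 ≤ d_W) (hs₀ : 0 < s)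
    (hc₁ : 0 < c₁) (hc₂ : 0 < c₂) (hc₄ : 0 < c₄)
    (p : ℝ → X → X → ℝ)
    (hmeas : ∀ x y : X, Measurable fun t => p t x y)
    (hlow : ∀ (t : ℝ) (x y : X), 0 < t →
      c₁ * t ^ (-(d_H / d_W)) *
          Real.exp (-c₂ * ((dist x y ^ d_W / t) ^ (1 / (d_W - 1)))) ≤ p t x y)
    (hup : ∀ (t : ℝ) (x y : X), 0 < t →
      p t x y ≤ c₃ * t ^ (-(d_H / d_W)) *
          Real.exp (-c₄ * ((dist x y ^ d_W / t) ^ (1 / (d_W - 1))))) :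
    ∃ c C : ℝ, 0 < c ∧ c ≤ C ∧
      ∀ x y : X, 0 < dist x y →
        IntegrableOn (fun t => p t x y * t ^ (-(1 + s))) (Set.Ioi (0 : ℝ)) ∧
        c * dist x y ^ (-(d_H + s * d_W)) ≤
          ∫ t in Set.Ioi (0 : ℝ), p t x y * t ^ (-(1 + s)) ∧
        (∫ t in Set.Ioi (0 : ℝ), p t x y * t ^ (-(1 + s))) ≤
          C * dist x y ^ (-(d_H + s * d_W)) := by
  have hdW₁ : 1 < d_W := by linarith
  have hds : 0 < d_H / d_W + s := by positivity
  set K := subGaussianJumpConst d_H d_W s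
  refine ⟨c₁ * K c₂, max (c₃ * K c₄) (c₁ * K c₂),
    mul_pos hc₁ (subGaussianJumpConst_pos hdW₁ hds hc₂), le_max_right _ _, fun x y hxy => ?_⟩
  obtain ⟨hint, hge, hle⟩ := integrableOn_and_setIntegral_mono_of_le_of_le measurableSet_Ioi
    ((hmeas x y).mul (measurable_id.pow_const (-(1 + s)))).aestronglyMeasurable
    ((integrableOn_subGaussianJumpIntegrand hdW₁ hds hc₂ hxy).const_mul c₁)
    ((integrableOn_subGaussianJumpIntegrand hdW₁ hds hc₄ hxy).const_mul c₃)
    (fun t (ht : 0 < t) => (mul_le_mul_of_nonneg_right (hlow t x y ht)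
      (rpow_nonneg ht.le _)).trans_eq' (by rw [subGaussianJumpIntegrand]; ring))
    (fun t (ht : 0 < t) => (mul_le_mul_of_nonneg_right (hup t x y ht)
      (rpow_nonneg ht.le _)).trans_eq (by rw [subGaussianJumpIntegrand]; ring))
  rw [integral_const_mul, integral_subGaussianJumpIntegrand hdW₁ hds hc₂ hxy] at hge
  rw [integral_const_mul, integral_subGaussianJumpIntegrand hdW₁ hds hc₄ hxy] at hle
  refine ⟨hint, by rwa [mul_assoc], hle.trans ?_⟩
  rw [← mul_assoc]
  gcongr
  exact le_max_left _ _

/-- if a heat kernel `p` satisfies two-sided sub-Gaussian bounds with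
Hausdorff dimension `d_H` and walk dimension `d_W`, then for `s ∈ (0,1)` the jump kernel
`K(x,y) = ∫₀^∞ p(t,x,y)·t^{-1-s} dt` is finite for `x ≠ y` and comparable to
`d(x,y)^{-(d_H + s·d_W)}`. -/
theorem jump_kernel_comparable
    {X : Type*} [MetricSpace X]
    (d_H d_W s c₁ c₂ c₃ c₄ : ℝ)
    (hdH : 0 < d_H) (hdW : 2 ≤ d_W) (hs₀ : 0 < s) (hs₁ : s < 1)
    (hc₁ : 0 < c₁) (hc₂ : 0 < c₂) (hc₃ : 0 < c₃) (hc₄ : 0 < c₄)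
    (p : ℝ → X → X → ℝ)
    (hmeas : ∀ x y : X, Measurable fun t => p t x y)
    (hlow : ∀ (t : ℝ) (x y : X), 0 < t →
      c₁ * t ^ (-(d_H / d_W)) *
          Real.exp (-c₂ * ((dist x y ^ d_W / t) ^ (1 / (d_W - 1)))) ≤ p t x y)
    (hup : ∀ (t : ℝ) (x y : X), 0 < t →
      p t x y ≤ c₃ * t ^ (-(d_H / d_W)) *
          Real.exp (-c₄ * ((dist x y ^ d_W / t) ^ (1 / (d_W - 1))))) :
    ∃ c C : ℝ, 0 < c ∧ c ≤ C ∧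
      ∀ x y : X, 0 < dist x y →
        IntegrableOn (fun t => p t x y * t ^ (-(1 + s))) (Set.Ioi (0 : ℝ)) ∧
        c * dist x y ^ (-(d_H + s * d_W)) ≤
          ∫ t in Set.Ioi (0 : ℝ), p t x y * t ^ (-(1 + s)) ∧
        (∫ t in Set.Ioi (0 : ℝ), p t x y * t ^ (-(1 + s))) ≤
          C * dist x y ^ (-(d_H + s * d_W)) :=
  jump_kernel_comparable_general d_H d_W s c₁ c₂ c₃ c₄ hdH hdW hs₀ hc₁ hc₂ hc₄ p hmeas hlow hup
end

section
/- (The half-space is a uniform domain in the extended space.) Let (X, d) be a geodesic metric space, i.e. for every pair x, x′ ∈ X there is an isometric embedding γ : [0, d(x, x′)] → X with γ(0) = x and γ(d(x, x′)) = x′. Equip X × ℝ with the metric d_a((x, y), (x′, y′)) = (d(x, x′)² + (y − y′)²)^{1/2}. Then the open upper half-space Ω = X × (0, ∞) is a uniform domain in (X × ℝ, d_a): there exist absolute constants c ∈ (0, 1) and C > 1 (independent of X) such that for any two points z, w ∈ Ω there is a continuous rectifiable curve γ : [0, 1] → Ω with γ(0) = z, γ(1) = w, whose length satisfies length(γ)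 ≤ C·d_a(z, w), and such that for every t ∈ [0, 1], dist_{d_a}(γ(t), (X × ℝ) ∖ Ω) ≥ c·min(d_a(z, γ(t)), d_a(γ(t), w)). -/
open Metric

/-- The extended metric `d_a((x,y),(x',y')) = (d(x,x')² + (y-y')²)^{1/2}` on `X × ℝ`. -/
noncomputable def da {X : Type*} [MetricSpace X] (z w : X × ℝ) : ℝ :=
  Real.sqrt (dist z.1 w.1 ^ 2 + (z.2 - w.2) ^ 2)

/-- The length of the curve `γ : [0,1] → X × ℝ` with respect to `d_a`: the supremum over
all partitions `0 = t₀ ≤ t₁ ≤ ⋯ ≤ tₙ = 1` of `Σᵢ d_a(γ(t_{i-1}), γ(tᵢ))`. -/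
noncomputable def daLength {X : Type*} [MetricSpace X] (γ : ℝ → X × ℝ) : ENNReal :=
  ⨆ (n : ℕ) (t : Fin (n + 1) → ℝ) (_ : Monotone t) (_ : t 0 = 0)
    (_ : t (Fin.last n) = 1),
    ENNReal.ofReal (∑ i : Fin n, da (γ (t i.castSucc)) (γ (t i.succ)))

/-- The `d_a`-distance from a point `z` to a set `S` in `X × ℝ`. -/
noncomputable def daDist {X : Type*} [MetricSpace X] (z : X × ℝ) (S : Set (X × ℝ)) : ℝ :=
  sInf ((fun w => da z w) '' S)

/-! Join `z` and `w` by a box: rise vertically from `z` to height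
`M = max z₂ w₂ + d(z₁, w₁)`, follow a geodesic from `z₁` to `w₁` at height `M`, and descend
vertically to `w`. Spending a third of `[0, 1]` on each leg makes the curve
`12 d_a(z, w)`-Lipschitz, which bounds its length. Its height bounds its distance to the
complement of the half-space from below, and dominates half the distance to the nearer endpoint: on a vertical leg
that distance is at most the height, and on the top leg it is at most `d(z₁, w₁) + M ≤ 2M`. -/

open Set
open scoped NNReal

lemma Fin.sum_succ_sub_castSucc {G : Type*} [AddCommGroup G] {n : ℕ} (t : Fin (n + 1) → G) :
    ∑ i : Fin n, (t i.succ - t i.castSucc) = t (Fin.last n) - t 0 := by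
  induction n with
  | zero => simp
  | succ n ih =>
    rw [Fin.sum_univ_castSucc]
    simp only [Fin.succ_castSucc]
    rw [ih (fun i => t i.castSucc), Fin.succ_last, Fin.castSucc_zero]
    abel

section ExtendedMetric

variable {X : Type*} [MetricSpace X]

lemma da_mk_mk_same_fst (x : X) (a b : ℝ) : da (x, a) (x, b) = |a - b| := by
  simp [da, Real.sqrt_sq_eq_abs]

lemma dist_fst_le_da (p q : X × ℝ) : dist p.1 q.1 ≤ da p q :=
  Real.le_sqrt_of_sq_le (le_add_of_nonneg_right (sq_nonneg _))

lemma abs_snd_sub_le_da (p q : X × ℝ) : |p.2 - q.2| ≤ da p q :=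
  Real.abs_le_sqrt (le_add_of_nonneg_left (sq_nonneg _))

lemma dist_le_da (p q : X × ℝ) : dist p q ≤ da p q :=
  max_le (dist_fst_le_da p q) (abs_snd_sub_le_da p q)

lemma da_le_dist_add_abs (p q : X × ℝ) : da p q ≤ dist p.1 q.1 + |p.2 - q.2| := by
  refine Real.sqrt_le_iff.mpr ⟨by positivity, ?_⟩
  rw [← sq_abs (p.2 - q.2)]
  nlinarith [dist_nonneg (x := p.1) (y := q.1), abs_nonneg (p.2 - q.2)]

lemma snd_le_daDist_setOf_snd_nonpos (q : X × ℝ) :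
    q.2 ≤ daDist q {p : X × ℝ | p.2 ≤ 0} := by
  refine le_csInf ⟨_, (q.1, 0), le_refl (0 : ℝ), rfl⟩ ?_
  rintro _ ⟨p, hp : p.2 ≤ 0, rfl⟩
  exact le_trans (by linarith [le_abs_self (q.2 - p.2)]) (abs_snd_sub_le_da q p)

variable {γ : ℝ → X × ℝ} {K : ℝ}

lemma daLength_le_of_da_le_mul (h : ∀ s ∈ Icc (0 : ℝ) 1, ∀ t ∈ Icc (0 : ℝ) 1,
    da (γ s) (γ t) ≤ K * |s - t|) : daLength γ ≤ ENNReal.ofReal K := by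
  refine iSup_le fun n => iSup_le fun t => iSup_le fun ht => iSup_le fun h0 => iSup_le fun h1 => ?_
  have hmem (i : Fin (n + 1)) : t i ∈ Icc (0 : ℝ) 1 :=
    ⟨h0 ▸ ht (Fin.zero_le i), h1 ▸ ht (Fin.le_last i)⟩
  refine ENNReal.ofReal_le_ofReal ?_
  calc ∑ i : Fin n, da (γ (t i.castSucc)) (γ (t i.succ))
      ≤ ∑ i : Fin n, K * (t i.succ - t i.castSucc) := by
        refine Finset.sum_le_sum fun i _ => (h _ (hmem _) _ (hmem _)).trans_eq ?_
        rw [abs_sub_comm, abs_of_nonneg (sub_nonneg.mpr (ht Fin.castSucc_lt_succ.le))]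
    _ = K := by rw [← Finset.mul_sum, Fin.sum_succ_sub_castSucc, h0, h1, sub_zero, mul_one]

lemma continuous_of_da_le_mul (h : ∀ s t, da (γ s) (γ t) ≤ K * |s - t|) : Continuous γ :=
  LipschitzWith.continuous (K := K.toNNReal) <| LipschitzWith.of_dist_le_mul fun s t =>
    (dist_le_da _ _).trans <| (h s t).trans <|
      mul_le_mul_of_nonneg_right (Real.le_coe_toNNReal K) (abs_nonneg _)

end ExtendedMetric

noncomputable def clampUnit (x : ℝ) : ℝ := projIcc (0 : ℝ) 1 zero_le_one x

lemma clampUnit_of_nonpos {x : ℝ} (hx : x ≤ 0) : clampUnit x = 0 := by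
  simp [clampUnit, projIcc_of_le_left _ hx]

lemma clampUnit_of_one_le {x : ℝ} (hx : 1 ≤ x) : clampUnit x = 1 := by
  simp [clampUnit, projIcc_of_right_le _ hx]

lemma clampUnit_mem (x : ℝ) : clampUnit x ∈ Icc (0 : ℝ) 1 := (projIcc 0 1 zero_le_one x).2

lemma abs_clampUnit_sub_le (x y : ℝ) : |clampUnit x - clampUnit y| ≤ |x - y| :=
  abs_projIcc_sub_projIcc zero_le_one

section BoxCurve

variable {X : Type*} {p : ℝ → X} {a b M : ℝ} {L : ℝ≥0}

/-- Rises from `(p 0, a)` to height `M` on `[0, 1/3]`, follows `p` at height `M` on `[1/3, 2/3]`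
and descends to `(p 1, b)` on `[2/3, 1]`. -/
noncomputable def boxCurve (p : ℝ → X) (a b M t : ℝ) : X × ℝ :=
  (p (clampUnit (3 * t - 1)),
    M - (M - a) * clampUnit (1 - 3 * t) - (M - b) * clampUnit (3 * t - 2))

lemma boxCurve_zero : boxCurve p a b M 0 = (p 0, a) := by
  simp [boxCurve, clampUnit_of_nonpos, clampUnit_of_one_le]

lemma boxCurve_one : boxCurve p a b M 1 = (p 1, b) := by
  norm_num [boxCurve, clampUnit_of_nonpos, clampUnit_of_one_le]

lemma boxCurve_of_le_half {t : ℝ} (ht : t ≤ 1 / 2) :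
    boxCurve p a b M t = (p (clampUnit (3 * t - 1)), M - (M - a) * clampUnit (1 - 3 * t)) := by
  simp [boxCurve, clampUnit_of_nonpos (show 3 * t - 2 ≤ 0 by linarith)]

lemma boxCurve_of_half_le {t : ℝ} (ht : 1 / 2 ≤ t) :
    boxCurve p a b M t = (p (clampUnit (3 * t - 1)), M - (M - b) * clampUnit (3 * t - 2)) := by
  simp [boxCurve, clampUnit_of_nonpos (show 1 - 3 * t ≤ 0 by linarith)]

lemma min_le_boxCurve_snd (ha : a ≤ M) (hb : b ≤ M) (t : ℝ) :
    min a b ≤ (boxCurve p a b M t).2 := by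
  rcases le_total t (1 / 2) with ht | ht
  · rw [boxCurve_of_le_half ht]
    nlinarith [min_le_left a b, (clampUnit_mem (1 - 3 * t)).2]
  · rw [boxCurve_of_half_le ht]
    nlinarith [min_le_right a b, (clampUnit_mem (3 * t - 2)).2]

variable [MetricSpace X]

lemma da_boxCurve_le_mul
    (hp : LipschitzOnWith L p (Icc 0 1))
    (ha : a ≤ M) (hb : b ≤ M) (s t : ℝ) :
    da (boxCurve p a b M s) (boxCurve p a b M t) ≤ 3 * (L + (M - a) + (M - b)) * |s - t| := by
  have hclamp (u v : ℝ) (huv : |u - v| = 3 * |s - t|) :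
      |clampUnit u - clampUnit v| ≤ 3 * |s - t| :=
    huv ▸ abs_clampUnit_sub_le u v
  have h3 : |(3 : ℝ)| = 3 := abs_of_pos three_pos
  have hfst := hclamp (3 * s - 1) (3 * t - 1) (by rw [← h3, ← abs_mul]; ring_nf)
  have hA := hclamp (1 - 3 * t) (1 - 3 * s) (by rw [← h3, ← abs_mul]; ring_nf)
  have hB := hclamp (3 * t - 2) (3 * s - 2) (by rw [abs_sub_comm s, ← h3, ← abs_mul]; ring_nf)
  calc da (boxCurve p a b M s) (boxCurve p a b M t)
      ≤ dist (p (clampUnit (3 * s - 1))) (p (clampUnit (3 * t - 1)))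
        + |(M - a) * (clampUnit (1 - 3 * t) - clampUnit (1 - 3 * s))
          + (M - b) * (clampUnit (3 * t - 2) - clampUnit (3 * s - 2))| :=
        (da_le_dist_add_abs _ _).trans_eq (by simp only [boxCurve]; ring_nf)
    _ ≤ L * |clampUnit (3 * s - 1) - clampUnit (3 * t - 1)|
        + ((M - a) * |clampUnit (1 - 3 * t) - clampUnit (1 - 3 * s)|
          + (M - b) * |clampUnit (3 * t - 2) - clampUnit (3 * s - 2)|) := by
        gcongr
        · exact hp.dist_le_mul _ (clampUnit_mem _) _ (clampUnit_mem _)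
        · refine (abs_add_le _ _).trans_eq ?_
          rw [abs_mul, abs_mul, abs_of_nonneg (sub_nonneg.2 ha), abs_of_nonneg (sub_nonneg.2 hb)]
    _ ≤ L * (3 * |s - t|) + ((M - a) * (3 * |s - t|) + (M - b) * (3 * |s - t|)) := by
        gcongr
    _ = 3 * (L + (M - a) + (M - b)) * |s - t| := by ring

lemma da_boxCurve_start_le
    (hp : LipschitzOnWith L p (Icc 0 1))
    (ha : 0 ≤ a) (hLa : L ≤ M - a) {t : ℝ} (ht : t ≤ 1 / 2) :
    da (p 0, a) (boxCurve p a b M t) ≤ 2 * (boxCurve p a b M t).2 := by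
  rw [boxCurve_of_le_half ht]
  rcases le_total t (1 / 3) with ht' | ht'
  · rw [clampUnit_of_nonpos (by linarith : 3 * t - 1 ≤ 0), da_mk_mk_same_fst]
    have hA := clampUnit_mem (1 - 3 * t)
    rw [abs_le]
    constructor <;> nlinarith [hA.1, hA.2]
  · rw [clampUnit_of_nonpos (by linarith : 1 - 3 * t ≤ 0), mul_zero, sub_zero]
    have hv := clampUnit_mem (3 * t - 1)
    calc da (p 0, a) (p (clampUnit (3 * t - 1)), M)
        ≤ L * |0 - clampUnit (3 * t - 1)| + |a - M| :=
          (da_le_dist_add_abs _ _).trans (by gcongr; exact hp.dist_le_mul _ (by simp) _ hv)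
      _ ≤ 2 * M := by
          rw [zero_sub, abs_neg, abs_of_nonneg hv.1, abs_sub_comm, abs_of_nonneg (by linarith)]
          nlinarith [hv.2]

lemma da_boxCurve_end_le
    (hp : LipschitzOnWith L p (Icc 0 1))
    (hb : 0 ≤ b) (hLb : L ≤ M - b) {t : ℝ} (ht : 1 / 2 ≤ t) :
    da (boxCurve p a b M t) (p 1, b) ≤ 2 * (boxCurve p a b M t).2 := by
  rw [boxCurve_of_half_le ht]
  rcases le_total (2 / 3) t with ht' | ht'
  · rw [clampUnit_of_one_le (by linarith : 1 ≤ 3 * t - 1), da_mk_mk_same_fst]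
    have hB := clampUnit_mem (3 * t - 2)
    rw [abs_le]
    constructor <;> nlinarith [hB.1, hB.2]
  · rw [clampUnit_of_nonpos (by linarith : 3 * t - 2 ≤ 0), mul_zero, sub_zero]
    have hv := clampUnit_mem (3 * t - 1)
    calc da (p (clampUnit (3 * t - 1)), M) (p 1, b)
        ≤ L * |clampUnit (3 * t - 1) - 1| + |M - b| :=
          (da_le_dist_add_abs _ _).trans (by gcongr; exact hp.dist_le_mul _ hv _ (by simp))
      _ ≤ 2 * M := by
          rw [abs_sub_comm, abs_of_nonneg (by linarith [hv.2]), abs_of_nonneg (by linarith)]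
          nlinarith [hv.1]

end BoxCurve

lemma exists_lipschitzOnWith_nndist_of_geodesic {X : Type*} [MetricSpace X] {x x' : X}
    (h : ∃ g : ℝ → X, g 0 = x ∧ g (dist x x') = x' ∧
      ∀ s ∈ Icc (0 : ℝ) (dist x x'), ∀ t ∈ Icc (0 : ℝ) (dist x x'), dist (g s) (g t) = |s - t|) :
    ∃ p : ℝ → X, p 0 = x ∧ p 1 = x' ∧ LipschitzOnWith (nndist x x') p (Icc 0 1) := by
  obtain ⟨g, hg0, hg1, hg⟩ := h
  have hscale {s : ℝ} (hs : s ∈ Icc (0 : ℝ) 1) : s * dist x x' ∈ Icc 0 (dist x x') :=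
    ⟨by nlinarith [hs.1, dist_nonneg (x := x) (y := x')],
      by nlinarith [hs.2, dist_nonneg (x := x) (y := x')]⟩
  refine ⟨fun s => g (s * dist x x'), by simpa using hg0, by simpa using hg1,
    LipschitzOnWith.of_dist_le_mul fun s hs t ht => ?_⟩
  rw [hg _ (hscale hs) _ (hscale ht), ← sub_mul, abs_mul, abs_of_nonneg dist_nonneg, mul_comm,
    coe_nndist, Real.dist_eq]

/-- The half-space is a uniform domain in the extended space: there exist
absolute constants `c ∈ (0,1)` and `C > 1` such that, for every geodesic metric space
`X`, any two points of the open upper half-space `Ω = X × (0,∞)` of `(X × ℝ, d_a)` can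
be joined by a continuous rectifiable curve `γ : [0,1] → Ω` with
`length(γ) ≤ C·d_a(z,w)` and `dist_{d_a}(γ(t), Ωᶜ) ≥ c·min(d_a(z,γ(t)), d_a(γ(t),w))`. -/
theorem halfspace_uniform_domain :
    ∃ c C : ℝ, 0 < c ∧ c < 1 ∧ 1 < C ∧
      ∀ (X : Type*) [MetricSpace X],
        (∀ x x' : X, ∃ g : ℝ → X, g 0 = x ∧ g (dist x x') = x' ∧
          ∀ s ∈ Set.Icc (0 : ℝ) (dist x x'), ∀ t ∈ Set.Icc (0 : ℝ) (dist x x'),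
            dist (g s) (g t) = |s - t|) →
        ∀ z w : X × ℝ, 0 < z.2 → 0 < w.2 →
          ∃ γ : ℝ → X × ℝ,
            ContinuousOn γ (Set.Icc 0 1) ∧ γ 0 = z ∧ γ 1 = w ∧
            (∀ t ∈ Set.Icc (0 : ℝ) 1, 0 < (γ t).2) ∧
            daLength γ ≤ ENNReal.ofReal (C * da z w) ∧
            ∀ t ∈ Set.Icc (0 : ℝ) 1,
              c * min (da z (γ t)) (da (γ t) w) ≤ daDist (γ t) {p : X × ℝ | p.2 ≤ 0} := by
  refine ⟨1 / 2, 12, by norm_num, by norm_num, by norm_num, fun X _ hgeo z w hz hw => ?_⟩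
  obtain ⟨p, hp0, hp1, hp⟩ := exists_lipschitzOnWith_nndist_of_geodesic (hgeo z.1 w.1)
  set M := max z.2 w.2 + dist z.1 w.1
  have hzM : z.2 ≤ M := by linarith [le_max_left z.2 w.2, dist_nonneg (x := z.1) (y := w.1)]
  have hwM : w.2 ≤ M := by linarith [le_max_right z.2 w.2, dist_nonneg (x := z.1) (y := w.1)]
  have hdist_z : dist z.1 w.1 ≤ M - z.2 := by linarith [le_max_left z.2 w.2]
  have hdist_w : dist z.1 w.1 ≤ M - w.2 := by linarith [le_max_right z.2 w.2]
  -- `(M - z.2) + (M - w.2) = 2 dist z.1 w.1 + |z.2 - w.2|`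
  have hK : 3 * (dist z.1 w.1 + (M - z.2) + (M - w.2)) ≤ 12 * da z w := by
    have hsnd := abs_le.mp (abs_snd_sub_le_da z w)
    have hmax : max z.2 w.2 ≤ (z.2 + w.2 + da z w) / 2 := max_le (by linarith) (by linarith)
    linarith [dist_fst_le_da z w]
  set γ := boxCurve p z.2 w.2 M
  have hlip (s t : ℝ) : da (γ s) (γ t) ≤ 12 * da z w * |s - t| :=
    (da_boxCurve_le_mul hp hzM hwM s t).trans
      (mul_le_mul_of_nonneg_right (by rwa [coe_nndist]) (abs_nonneg _))
  refine ⟨γ, (continuous_of_da_le_mul hlip).continuousOn, by simp [γ, boxCurve_zero, hp0],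
    by simp [γ, boxCurve_one, hp1],
    fun t _ => (lt_min hz hw).trans_le (min_le_boxCurve_snd hzM hwM t),
    daLength_le_of_da_le_mul fun s _ t _ => hlip s t, fun t _ => ?_⟩
  refine le_trans ?_ (snd_le_daDist_setOf_snd_nonpos (γ t))
  rcases le_total t (1 / 2) with ht | ht
  · have h := da_boxCurve_start_le (b := w.2) hp hz.le hdist_z ht
    rw [hp0] at h
    linarith [min_le_left (da z (γ t)) (da (γ t) w)]
  · have h := da_boxCurve_end_le (a := z.2) hp hw.le hdist_w ht
    rw [hp1] at h
    linarith [min_le_right (da z (γ t)) (da (γ t) w)]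
end
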